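/- arXiv:1607.05807 — 3 statements merged into one kernel-verified Lean document; each statement's English description precedes it below -/
import Mathlib

section
/- Let V and W be real normed vector spaces, D : V → W a continuous linear map which is stable, i.e. there exists a constant C_S > 0 with ‖D v‖ ≥ C_S ‖v‖ for all v ∈ V. Let S ⊆ W be a linear subspace and I : W → W a continuous linear map with I h = h for every h ∈ S. Suppose T, T_r ∈ V satisfy D T_r = I (D T). Then ‖T_r − T‖ ≤ (1/C_S) · (1 + ‖I‖) · infDist(D T, S). (This is the abstract form of Corollary 1: under stability of the differential operator, the convergence of the numerical solution T_r to the analytical solution T is controlled by the consistency error, yielding ‖T_r − T‖ ≤ (K/C_S)‖D‖(1 + ‖I^ρ‖)ω(T, ρ).) -/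
/-! The error `T_r - T` is mapped by `D` to the interpolation error `I (D T) - D T`. Since `I`
fixes `S`, for every `h ∈ S` this equals `(h - D T) - I (h - D T)`, of norm at most
`(1 + ‖I‖) ‖D T - h‖`, so the interpolation error is at most `(1 + ‖I‖)` times the distance
from `D T` to `S` (Lebesgue's lemma); stability then converts this bound on `D (T_r - T)` into
one on `T_r - T` at the cost of a factor `1 / C_S`. -/

section Lebesgue

variable {𝕜 E : Type*} [NontriviallyNormedField 𝕜] [SeminormedAddCommGroup E] [NormedSpace 𝕜 E]

theorem norm_apply_sub_le_of_apply_eq {I : E →L[𝕜] E} {h : E} (hIh : I h = h) (x : E) :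
    ‖I x - x‖ ≤ (1 + ‖I‖) * dist x h := by
  have hsplit : I x - x = I (x - h) - (x - h) := by
    rw [map_sub, hIh]; abel
  calc ‖I x - x‖ = ‖I (x - h) - (x - h)‖ := by rw [hsplit]
    _ ≤ ‖I (x - h)‖ + ‖x - h‖ := norm_sub_le _ _
    _ ≤ ‖I‖ * ‖x - h‖ + ‖x - h‖ := by gcongr; exact I.le_opNorm _
    _ = (1 + ‖I‖) * dist x h := by rw [dist_eq_norm]; ring

theorem norm_apply_sub_le_mul_infDist {I : E →L[𝕜] E} {S : Set E} (hS : S.Nonempty)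
    (hI : ∀ h ∈ S, I h = h) (x : E) :
    ‖I x - x‖ ≤ (1 + ‖I‖) * Metric.infDist x S := by
  have hpos : 0 < 1 + ‖I‖ := by positivity
  rw [mul_comm, ← div_le_iff₀ hpos, Metric.le_infDist hS]
  intro h hh
  rw [div_le_iff₀ hpos, mul_comm]
  exact norm_apply_sub_le_of_apply_eq (hI h hh) x

end Lebesgue

theorem igaC_convergence_by_stability
    {V W : Type*} [NormedAddCommGroup V] [NormedSpace ℝ V]
    [NormedAddCommGroup W] [NormedSpace ℝ W]
    (D : V →L[ℝ] W) (C_S : ℝ) (hCS : 0 < C_S)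
    (hstable : ∀ v : V, C_S * ‖v‖ ≤ ‖D v‖)
    (S : Submodule ℝ W) (I : W →L[ℝ] W)
    (hI : ∀ h ∈ S, I h = h)
    (T T_r : V) (hTr : D T_r = I (D T)) :
    ‖T_r - T‖ ≤ (1 / C_S) * (1 + ‖I‖) * Metric.infDist (D T) (S : Set W) := by
  have hstable' : ‖T_r - T‖ ≤ (1 / C_S) * ‖D (T_r - T)‖ := by
    rw [one_div_mul_eq_div, le_div_iff₀ hCS, mul_comm]
    exact hstable _
  calc ‖T_r - T‖ ≤ (1 / C_S) * ‖I (D T) - D T‖ := by rwa [map_sub, hTr] at hstable'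
    _ ≤ (1 / C_S) * ((1 + ‖I‖) * Metric.infDist (D T) S) := by
        gcongr
        exact norm_apply_sub_le_mul_infDist ⟨0, S.zero_mem⟩ hI _
    _ = (1 / C_S) * (1 + ‖I‖) * Metric.infDist (D T) S := (mul_assoc _ _ _).symm
end

section
/- Let V and W be real normed vector spaces, D : V → W a continuous linear map which is stable with constant C_S > 0 (‖D v‖ ≥ C_S ‖v‖ for all v ∈ V), S ⊆ W a linear subspace, I : W → W a continuous linear map with I h = h for every h ∈ S, and T, T_r ∈ V with D T_r = I (D T). If there exists q ∈ V with D q ∈ S and ‖T − q‖ ≤ ε, then ‖T_r − T‖ ≤ (1/C_S) · (1 + ‖I‖) · ‖D‖ · ε. (Taking ε = K ω(T, ρ) ≤ ρ K max‖∇T‖, this is Corollary 1 of the paper: ‖T_r − T‖_V ≤ (K/C_S)‖D‖(1 + ‖I^ρ‖)ω(T, ρ) ≤ (ρK/C_S)‖D‖(1 + ‖I^ρ‖) max_η ‖∇T(η)‖.) -/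
/-!
The defect `D (T_r - T) = I (D T) - D T` is the interpolation error of `D T`. Since `I` fixes
`D q ∈ S`, the Lebesgue-lemma bound gives `‖I w - w‖ ≤ (1 + ‖I‖) ‖w - D q‖` with `w = D T`, and
`‖D T - D q‖ ≤ ‖D‖ ε`; stability then transfers the bound from `W` back to `V` at the cost `1 / C_S`.
-/

theorem ContinuousLinearMap.norm_apply_sub_self_le_of_apply_eq_self
    {𝕜 E : Type*} [NontriviallyNormedField 𝕜] [SeminormedAddCommGroup E] [NormedSpace 𝕜 E]
    (P : E →L[𝕜] E) {s : E} (hs : P s = s) (w : E) :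
    ‖P w - w‖ ≤ (1 + ‖P‖) * ‖w - s‖ :=
  calc ‖P w - w‖ = ‖P (w - s) - (w - s)‖ := by rw [map_sub, hs, sub_sub_sub_cancel_right]
    _ ≤ ‖P (w - s)‖ + ‖w - s‖ := norm_sub_le _ _
    _ ≤ ‖P‖ * ‖w - s‖ + ‖w - s‖ := by gcongr; exact P.le_opNorm _
    _ = (1 + ‖P‖) * ‖w - s‖ := by ring

theorem igaC_convergence_rate_general
    {V W : Type*} [NormedAddCommGroup V] [NormedSpace ℝ V]
    [NormedAddCommGroup W] [NormedSpace ℝ W]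
    (D : V →L[ℝ] W) (C_S : ℝ) (hCS : 0 < C_S)
    (hstable : ∀ v : V, C_S * ‖v‖ ≤ ‖D v‖)
    (S : Submodule ℝ W) (I : W →L[ℝ] W)
    (hI : ∀ h ∈ S, I h = h)
    (T T_r : V) (hTr : D T_r = I (D T))
    (ε : ℝ)
    (hq : ∃ q : V, D q ∈ S ∧ ‖T - q‖ ≤ ε) :
    ‖T_r - T‖ ≤ (1 / C_S) * (1 + ‖I‖) * ‖D‖ * ε := by
  obtain ⟨q, hqS, hqε⟩ := hq
  have hdefect : ‖D (T_r - T)‖ ≤ (1 + ‖I‖) * (‖D‖ * ε) :=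
    calc ‖D (T_r - T)‖ = ‖I (D T) - D T‖ := by rw [map_sub, hTr]
      _ ≤ (1 + ‖I‖) * ‖D T - D q‖ :=
        I.norm_apply_sub_self_le_of_apply_eq_self (hI _ hqS) _
      _ ≤ (1 + ‖I‖) * (‖D‖ * ε) := by
        rw [← map_sub]
        gcongr
        exact D.le_opNorm_of_le hqε
  calc ‖T_r - T‖ ≤ ‖D (T_r - T)‖ / C_S := (le_div_iff₀' hCS).2 (hstable _)
    _ ≤ (1 + ‖I‖) * (‖D‖ * ε) / C_S := by gcongr
    _ = (1 / C_S) * (1 + ‖I‖) * ‖D‖ * ε := by ring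

theorem igaC_convergence_rate
    {V W : Type*} [NormedAddCommGroup V] [NormedSpace ℝ V]
    [NormedAddCommGroup W] [NormedSpace ℝ W]
    (D : V →L[ℝ] W) (C_S : ℝ) (hCS : 0 < C_S)
    (hstable : ∀ v : V, C_S * ‖v‖ ≤ ‖D v‖)
    (S : Submodule ℝ W) (I : W →L[ℝ] W)
    (hI : ∀ h ∈ S, I h = h)
    (T T_r : V) (hTr : D T_r = I (D T))
    (ε : ℝ) (hε : 0 ≤ ε)
    (hq : ∃ q : V, D q ∈ S ∧ ‖T - q‖ ≤ ε) :
    ‖T_r - T‖ ≤ (1 / C_S) * (1 + ‖I‖) * ‖D‖ * ε :=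
  igaC_convergence_rate_general D C_S hCS hstable S I hI T T_r hTr ε hq
end

section
/- Let V and W be real normed vector spaces and D : V → W a continuous linear map which is stable, i.e. there exists C_S > 0 with ‖D v‖ ≥ C_S ‖v‖ for all v ∈ V. Let (Sₙ)ₙ be a sequence of linear subspaces of W and (Iₙ)ₙ a sequence of continuous linear maps Iₙ : W → W with Iₙ h = h for every h ∈ Sₙ, and suppose there exists C ≥ 0 with ‖Iₙ‖ ≤ C for all n. Let T ∈ V, and for each n let T_{r,n} ∈ V satisfy D T_{r,n} = Iₙ (D T). If infDist(D T, Sₙ) → 0 as n → ∞, then T_{r,n} → T in V. (This is the abstract convergence statement obtained by combining Lemma 3 with the stability of the differential operator, as in Corollary 1: when the operator D of the boundary value problem D T = f is stable and the collocation interpolation operators are uniformly bounded as the knot grid size tends to 0, the numerical solutions converge to the analytical solution.) -/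
/-!
Since `Iₙ` fixes `Sₙ`, for every `h ∈ Sₙ` we have `Iₙ (D T) - D T = Iₙ (D T - h) - (D T - h)`, so
`‖Iₙ (D T) - D T‖ ≤ (C + 1) · infDist (D T, Sₙ)` and hence `D T_{r,n} → D T`. Stability makes `D`
antilipschitz, hence uniformly inducing, so convergence pulls back to `T_{r,n} → T`.
-/

open Filter Metric Topology

section Quasioptimality

variable {𝕜 E : Type*} [NontriviallyNormedField 𝕜] [SeminormedAddCommGroup E] [NormedSpace 𝕜 E]

theorem ContinuousLinearMap.norm_apply_sub_self_le_mul_infDist (f : E →L[𝕜] E) {S : Set E}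
    (hS : S.Nonempty) (hf : ∀ h ∈ S, f h = h) (x : E) :
    ‖f x - x‖ ≤ (‖f‖ + 1) * infDist x S := by
  rw [← div_le_iff₀' (by positivity), le_infDist hS]
  intro h hh
  rw [div_le_iff₀' (by positivity), dist_eq_norm]
  calc ‖f x - x‖ = ‖f (x - h) - (x - h)‖ := by rw [map_sub, hf h hh, sub_sub_sub_cancel_right]
    _ ≤ ‖f (x - h)‖ + ‖x - h‖ := norm_sub_le _ _
    _ ≤ ‖f‖ * ‖x - h‖ + ‖x - h‖ := by gcongr; exact f.le_opNorm _
    _ = (‖f‖ + 1) * ‖x - h‖ := by ring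

theorem tendsto_apply_of_infDist_tendsto_zero {ι : Type*} {l : Filter ι} (f : ι → E →L[𝕜] E)
    (S : ι → Submodule 𝕜 E) (hf : ∀ i, ∀ h ∈ S i, f i h = h) {C : ℝ} (hbound : ∀ i, ‖f i‖ ≤ C)
    {x : E} (hx : Tendsto (fun i => infDist x (S i : Set E)) l (𝓝 0)) :
    Tendsto (fun i => f i x) l (𝓝 x) := by
  rw [tendsto_iff_norm_sub_tendsto_zero]
  refine squeeze_zero (fun _ => norm_nonneg _) (fun i => ?_) (by simpa using hx.const_mul (C + 1))
  calc ‖f i x - x‖ ≤ (‖f i‖ + 1) * infDist x (S i : Set E) :=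
        (f i).norm_apply_sub_self_le_mul_infDist ⟨0, (S i).zero_mem⟩ (hf i) x
    _ ≤ (C + 1) * infDist x (S i : Set E) := by gcongr; exacts [infDist_nonneg, hbound i]

end Quasioptimality

theorem ContinuousLinearMap.antilipschitzWith_of_mul_norm_le {𝕜 E F : Type*}
    [NontriviallyNormedField 𝕜] [SeminormedAddCommGroup E] [NormedSpace 𝕜 E]
    [SeminormedAddCommGroup F] [NormedSpace 𝕜 F] (f : E →L[𝕜] F) {c : ℝ} (hc : 0 < c)
    (hf : ∀ x, c * ‖x‖ ≤ ‖f x‖) : AntilipschitzWith c⁻¹.toNNReal f :=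
  f.antilipschitz_of_bound fun x => by
    rw [Real.coe_toNNReal _ (inv_nonneg.2 hc.le), ← div_eq_inv_mul, le_div_iff₀' hc]
    exact hf x

theorem igaC_solutions_converge_general
    {V W : Type*} [NormedAddCommGroup V] [NormedSpace ℝ V]
    [NormedAddCommGroup W] [NormedSpace ℝ W]
    (D : V →L[ℝ] W) (C_S : ℝ) (hCS : 0 < C_S)
    (hstable : ∀ v : V, C_S * ‖v‖ ≤ ‖D v‖)
    (S : ℕ → Submodule ℝ W) (I : ℕ → W →L[ℝ] W)
    (hI : ∀ n, ∀ h ∈ S n, I n h = h)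
    (C : ℝ) (hbound : ∀ n, ‖I n‖ ≤ C)
    (T : V) (T_r : ℕ → V) (hTr : ∀ n, D (T_r n) = I n (D T))
    (hdense : Filter.Tendsto (fun n => Metric.infDist (D T) ((S n : Set W)))
      Filter.atTop (nhds 0)) :
    Filter.Tendsto T_r Filter.atTop (nhds T) := by
  have hD : IsInducing D :=
    ((D.antilipschitzWith_of_mul_norm_le hCS hstable).isUniformInducing
      D.uniformContinuous).isInducing
  rw [hD.tendsto_nhds_iff]
  simpa only [Function.comp_def, hTr] using
    tendsto_apply_of_infDist_tendsto_zero I S hI hbound hdense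

theorem igaC_solutions_converge
    {V W : Type*} [NormedAddCommGroup V] [NormedSpace ℝ V]
    [NormedAddCommGroup W] [NormedSpace ℝ W]
    (D : V →L[ℝ] W) (C_S : ℝ) (hCS : 0 < C_S)
    (hstable : ∀ v : V, C_S * ‖v‖ ≤ ‖D v‖)
    (S : ℕ → Submodule ℝ W) (I : ℕ → W →L[ℝ] W)
    (hI : ∀ n, ∀ h ∈ S n, I n h = h)
    (C : ℝ) (hC : 0 ≤ C) (hbound : ∀ n, ‖I n‖ ≤ C)
    (T : V) (T_r : ℕ → V) (hTr : ∀ n, D (T_r n) = I n (D T))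
    (hdense : Filter.Tendsto (fun n => Metric.infDist (D T) ((S n : Set W)))
      Filter.atTop (nhds 0)) :
    Filter.Tendsto T_r Filter.atTop (nhds T) :=
  igaC_solutions_converge_general D C_S hCS hstable S I hI C hbound T T_r hTr hdense
end
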